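/- arXiv:1307.2937 — 5 statements merged into one kernel-verified Lean document; each statement's English description precedes it below -/
import Mathlib

section
/- Let R be a strict p-ring, S a p-adically complete ring, and t: R/(p) → S a multiplicative map whose composition with the projection S → S/(p) is a ring homomorphism. Then the map T sending Σ p^n [x̄_n] to Σ p^n t(x̄_n) is a p-adically continuous ring homomorphism R → S with T ∘ [·] = t. -/
/-!
Let `σ x = [x̄ ^ (1/p)]`, so that `x = σ x ^ p + p * ρ x` with `ρ x` unique since `R` is
`p`-torsion-free. A lift `T` would have to satisfy `T x = T (σ x) ^ p + p * T (ρ x)`, and this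
identity drives the construction: if `F` is a ring homomorphism modulo `p ^ (k + 1)`, then so is
`x ↦ F (σ x) ^ p + p * F (ρ x)` modulo `p ^ (k + 2)`, because `u ≡ v` modulo `p ^ (k + 1)` gives
`u ^ p ≡ v ^ p` modulo `p ^ (k + 2)`. Iterating from `t ∘ (mod p)` gives a compatible system of
ring homomorphisms `R → S ⧸ p ^ (n + 1)`, hence a ring homomorphism `T : R → S` with
`T ≡ t ∘ (mod p)` modulo `p`. The multiplicative maps `T ∘ [·]` and `t` then agree modulo `p` on
the perfect monoid `R ⧸ p`, hence modulo every `p ^ (n + 1)` by writing `a = b ^ p`.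
Uniqueness holds because every `x` lies in `[x̄] + p R`.
-/

open Ideal MvPolynomial

section PowerCongruences

variable {S : Type*} [CommRing S] {I : Ideal S} {p : ℕ}

theorem Ideal.pow_sub_pow_mem_pow_add_two (hpI : (p : S) ∈ I) {k : ℕ} {x y : S}
    (h : x - y ∈ I ^ (k + 1)) : x ^ p - y ^ p ∈ I ^ (k + 2) := by
  have hxy : Ideal.Quotient.mk I x = Ideal.Quotient.mk I y :=
    Ideal.Quotient.eq.mpr (pow_le_self k.succ_ne_zero h)
  have hsum : ∑ i ∈ Finset.range p, x ^ i * y ^ (p - 1 - i) ∈ I := by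
    rw [← Ideal.Quotient.eq_zero_iff_mem, RingHom.map_geom_sum₂, hxy, geom_sum₂_self,
      ← map_natCast (Ideal.Quotient.mk I), Ideal.Quotient.eq_zero_iff_mem.mpr hpI, zero_mul]
  rw [← geom_sum₂_mul, pow_succ']
  exact mul_mem_mul hsum h

theorem Ideal.natCast_mul_mem_pow_succ (hpI : (p : S) ∈ I) {k : ℕ} {x : S} (h : x ∈ I ^ k) :
    p * x ∈ I ^ (k + 1) := by
  rw [pow_succ']
  exact mul_mem_mul hpI h

end PowerCongruences

theorem exists_add_add_mul_pow_eq {p : ℕ} (hp : p.Prime) :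
    ∃ g : MvPolynomial (Fin 3) ℤ, (X 0 + X 1 + (p : MvPolynomial (Fin 3) ℤ) * X 2) ^ p =
      X 0 ^ p + X 1 ^ p + (p : MvPolynomial (Fin 3) ℤ) * g := by
  obtain ⟨r, hr⟩ :=
    exists_add_pow_prime_eq hp (X 0 + X 1) ((p : MvPolynomial (Fin 3) ℤ) * X 2)
  obtain ⟨r', hr'⟩ := exists_add_pow_prime_eq hp (X 0 : MvPolynomial (Fin 3) ℤ) (X 1)
  obtain ⟨q, hq⟩ := dvd_pow_self (p : MvPolynomial (Fin 3) ℤ) hp.ne_zero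
  refine ⟨X 0 * X 1 * r' + q * X 2 ^ p +
    (p : MvPolynomial (Fin 3) ℤ) * (X 0 + X 1) * X 2 * r, ?_⟩
  rw [hr, hr', mul_pow, hq]
  ring

noncomputable def addPowCarry {p : ℕ} (hp : p.Prime) : MvPolynomial (Fin 3) ℤ :=
  (exists_add_add_mul_pow_eq hp).choose

theorem add_add_mul_pow_eq {p : ℕ} (hp : p.Prime) {A : Type*} [CommRing A] (a b c : A) :
    (a + b + p * c) ^ p = a ^ p + b ^ p + p * aeval ![a, b, c] (addPowCarry hp) := by
  simpa [addPowCarry] using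
    congrArg (aeval ![a, b, c]) (exists_add_add_mul_pow_eq hp).choose_spec

theorem RingHom.map_aeval_int {A B σ : Type*} [CommRing A] [CommRing B] (φ : A →+* B)
    (v : σ → A) (g : MvPolynomial σ ℤ) : φ (aeval v g) = aeval (φ ∘ v) g :=
  comp_aeval_apply v φ.toIntAlgHom g

section IsRingHomMod

variable {R S : Type*} [CommRing R] [CommRing S]

structure IsRingHomMod (I : Ideal S) (F : R → S) : Prop where
  map_one_sub_mem : F 1 - 1 ∈ I
  map_mul_sub_mem : ∀ a b, F (a * b) - F a * F b ∈ I
  map_add_sub_mem : ∀ a b, F (a + b) - (F a + F b) ∈ I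

variable {I : Ideal S} {F : R → S}

def IsRingHomMod.toRingHom (hF : IsRingHomMod I F) : R →+* S ⧸ I :=
  RingHom.mk'
    { toFun := fun x => Ideal.Quotient.mk I (F x)
      map_one' := by
        rw [← map_one (Ideal.Quotient.mk I), Ideal.Quotient.eq]; exact hF.map_one_sub_mem
      map_mul' := fun a b => by
        rw [← map_mul, Ideal.Quotient.eq]; exact hF.map_mul_sub_mem a b }
    fun a b => by
      simp only [MonoidHom.coe_mk, OneHom.coe_mk]
      rw [← map_add, Ideal.Quotient.eq]; exact hF.map_add_sub_mem a b

theorem IsRingHomMod.toRingHom_apply (hF : IsRingHomMod I F) (x : R) :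
    hF.toRingHom x = Ideal.Quotient.mk I (F x) := rfl

theorem IsRingHomMod.sub_mem_iff (hF : IsRingHomMod I F) {x : R} {y : S} :
    F x - y ∈ I ↔ hF.toRingHom x = Ideal.Quotient.mk I y := by
  rw [toRingHom_apply, Ideal.Quotient.eq]

theorem IsRingHomMod.map_zero_mem (hF : IsRingHomMod I F) : F 0 ∈ I := by
  simpa using hF.sub_mem_iff (x := 0) (y := 0) |>.mpr (map_zero _)

theorem MonoidHom.isRingHomMod_comp {A : Type*} [CommRing A] (t : A →* S)
    (ht : ∀ x y, Ideal.Quotient.mk I (t (x + y)) =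
      Ideal.Quotient.mk I (t x) + Ideal.Quotient.mk I (t y))
    (π : R →+* A) : IsRingHomMod I fun x => t (π x) where
  map_one_sub_mem := by simp
  map_mul_sub_mem a b := by simp
  map_add_sub_mem a b := by
    rw [← Ideal.Quotient.eq_zero_iff_mem, map_sub, map_add π, ht, map_add, sub_self]

end IsRingHomMod

section RootRemainder

variable {R : Type*} [CommRing R] {p : ℕ} {σ : R →* R} {ρ : R → R}
  (hreg : IsLeftRegular (p : R)) (hσρ : ∀ x, x = σ x ^ p + p * ρ x)
include hreg hσρ

theorem root_rem_one : ρ 1 = 0 := by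
  refine hreg ?_
  have := hσρ 1
  rw [map_one, one_pow] at this
  linear_combination -this

theorem root_rem_mul (a b : R) :
    ρ (a * b) = σ a ^ p * ρ b + σ b ^ p * ρ a + p * (ρ a * ρ b) := by
  have h := hσρ (a * b)
  rw [map_mul, mul_pow] at h
  refine hreg ?_
  linear_combination -h + b * hσρ a + (σ a ^ p + p * ρ a) * hσρ b

theorem root_rem_add (hp : p.Prime) {a b c : R} (hc : σ (a + b) = σ a + σ b + p * c) :
    ρ (a + b) = ρ a + ρ b - aeval ![σ a, σ b, c] (addPowCarry hp) := by
  have h := hσρ (a + b)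
  rw [hc, add_add_mul_pow_eq hp] at h
  refine hreg ?_
  linear_combination -h + hσρ a + hσρ b

end RootRemainder

def rootStep {R S : Type*} [CommRing R] [CommRing S] (p : ℕ) (σ : R →* R) (ρ : R → R)
    (F : R → S) : R → S :=
  fun x => F (σ x) ^ p + p * F (ρ x)

section RootStep

variable {p : ℕ} {R S : Type*} [CommRing R] [CommRing S] {σ : R →* R} {ρ : R → R}
  {I : Ideal S} {k : ℕ} {F : R → S}

theorem rootStep_sub_rootStep_mem (hpI : (p : S) ∈ I) {F' : R → S}
    (h : ∀ x, F x - F' x ∈ I ^ (k + 1)) (x : R) :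
    rootStep p σ ρ F x - rootStep p σ ρ F' x ∈ I ^ (k + 2) := by
  convert add_mem (pow_sub_pow_mem_pow_add_two hpI (h (σ x)))
    (natCast_mul_mem_pow_succ hpI (h (ρ x))) using 1
  simp only [rootStep]; ring

variable (hreg : IsLeftRegular (p : R)) (hσρ : ∀ x, x = σ x ^ p + p * ρ x)
  (hpI : (p : S) ∈ I) (hF : IsRingHomMod (I ^ (k + 1)) F)
include hreg hσρ hpI hF

theorem IsRingHomMod.rootStep_map_one :
    rootStep p σ ρ F 1 - 1 ∈ I ^ (k + 2) := by
  convert add_mem (pow_sub_pow_mem_pow_add_two hpI hF.map_one_sub_mem)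
    (natCast_mul_mem_pow_succ hpI hF.map_zero_mem) using 1
  simp only [rootStep, map_one, root_rem_one hreg hσρ, one_pow]
  ring

theorem IsRingHomMod.rootStep_map_mul (a b : R) :
    rootStep p σ ρ F (a * b) - rootStep p σ ρ F a * rootStep p σ ρ F b ∈ I ^ (k + 2) := by
  have hρ : F (ρ (a * b)) - (F (σ a) ^ p * F (ρ b) + F (σ b) ^ p * F (ρ a) +
      p * (F (ρ a) * F (ρ b))) ∈ I ^ (k + 1) := by
    rw [hF.sub_mem_iff, root_rem_mul hreg hσρ]
    simp only [map_add, map_mul, map_pow, map_natCast]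
    simp only [hF.toRingHom_apply]
  convert add_mem (pow_sub_pow_mem_pow_add_two hpI (hF.map_mul_sub_mem (σ a) (σ b)))
    (natCast_mul_mem_pow_succ hpI hρ) using 1
  simp only [rootStep, map_mul]; ring

theorem IsRingHomMod.rootStep_map_add (hp : p.Prime)
    (hσ : ∀ a b, (p : R) ∣ σ (a + b) - (σ a + σ b)) (a b : R) :
    rootStep p σ ρ F (a + b) - (rootStep p σ ρ F a + rootStep p σ ρ F b) ∈ I ^ (k + 2) := by
  obtain ⟨c, hc⟩ := hσ a b
  replace hc : σ (a + b) = σ a + σ b + p * c := by linear_combination hc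
  have hσ' : F (σ (a + b)) - (F (σ a) + F (σ b) + p * F c) ∈ I ^ (k + 1) := by
    rw [hF.sub_mem_iff, hc]
    simp only [map_add, map_mul, map_natCast]
    simp only [hF.toRingHom_apply]
  have hρ : F (ρ (a + b)) - (F (ρ a) + F (ρ b) - aeval ![F (σ a), F (σ b), F c]
      (addPowCarry hp)) ∈ I ^ (k + 1) := by
    rw [hF.sub_mem_iff, root_rem_add hreg hσρ hp hc, map_sub, map_add, RingHom.map_aeval_int,
      map_sub, map_add, RingHom.map_aeval_int]
    congr 3
    funext i
    fin_cases i <;> rfl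
  convert add_mem (pow_sub_pow_mem_pow_add_two hpI hσ') (natCast_mul_mem_pow_succ hpI hρ) using 1
  simp only [rootStep, add_add_mul_pow_eq hp]; ring

theorem IsRingHomMod.rootStep (hp : p.Prime)
    (hσ : ∀ a b, (p : R) ∣ σ (a + b) - (σ a + σ b)) :
    IsRingHomMod (I ^ (k + 2)) (rootStep p σ ρ F) :=
  ⟨hF.rootStep_map_one hreg hσρ hpI, hF.rootStep_map_mul hreg hσρ hpI,
    hF.rootStep_map_add hreg hσρ hpI hp hσ⟩

end RootStep

section Lift

variable {p : ℕ} {R S : Type*} [CommRing R] [CommRing S] {I : Ideal S} [IsAdicComplete I S]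

theorem exists_ringHom_sub_mem (hp : p.Prime) (hpI : (p : S) ∈ I) {σ : R →* R} {ρ : R → R}
    (hreg : IsLeftRegular (p : R)) (hσρ : ∀ x, x = σ x ^ p + p * ρ x)
    (hσ : ∀ a b, (p : R) ∣ σ (a + b) - (σ a + σ b)) {F₀ : R → S}
    (hF₀ : IsRingHomMod I F₀)
    (hF₀σ : ∀ x, F₀ (σ x) ^ p - F₀ x ∈ I) :
    ∃ T : R →+* S, ∀ x, T x - F₀ x ∈ I := by
  let F : ℕ → R → S := fun n => (rootStep p σ ρ)^[n] F₀
  have hF : ∀ n, IsRingHomMod (I ^ (n + 1)) (F n) := by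
    intro n
    induction n with
    | zero => simpa [F] using hF₀
    | succ n ih =>
      simpa only [F, Function.iterate_succ_apply'] using ih.rootStep hreg hσρ hpI hp hσ
  have hF_succ : ∀ n x, F (n + 1) x - F n x ∈ I ^ (n + 1) := by
    intro n
    induction n with
    | zero =>
      intro x
      rw [zero_add, pow_one]
      convert add_mem (hF₀σ x) (I.mul_mem_right (F₀ (ρ x)) hpI) using 1
      simp only [F, rootStep, Function.iterate_one, Function.iterate_zero, id]; ring
    | succ n ih =>
      intro x
      simpa only [F, Function.iterate_succ_apply'] using rootStep_sub_rootStep_mem hpI ih x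
  have ha : StrictMono (· + 1 : ℕ → ℕ) := fun _ _ h => Nat.add_lt_add_right h 1
  let f : (n : ℕ) → R →+* S ⧸ I ^ (n + 1) := fun n => (hF n).toRingHom
  have hf : ∀ {m : ℕ},
      (Ideal.Quotient.factorPow I (ha.monotone m.le_succ)).comp (f (m + 1)) = f m := by
    intro m
    ext x
    rw [RingHom.comp_apply]
    simp only [f, IsRingHomMod.toRingHom_apply, Ideal.Quotient.factorPow,
      Ideal.Quotient.factor_mk]
    exact Ideal.Quotient.eq.mpr (hF_succ m x)
  refine ⟨IsAdicComplete.StrictMono.liftRingHom I ha f hf, fun x => ?_⟩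
  have h0 := IsAdicComplete.StrictMono.mk_liftRingHom I ha f hf (n := 0) x
  rwa [IsRingHomMod.toRingHom_apply, Ideal.Quotient.eq, zero_add, pow_one] at h0

end Lift

section Uniqueness

variable {p : ℕ} {S : Type*} [CommRing S] {I : Ideal S} [IsHausdorff I S]

theorem MonoidHom.eq_of_sub_mem_of_surjective_pow {M : Type*} [Monoid M]
    (hM : Function.Surjective fun x : M => x ^ p) (hpI : (p : S) ∈ I) {u v : M →* S}
    (h : ∀ a, u a - v a ∈ I) : u = v := by
  have key : ∀ n a, u a - v a ∈ I ^ (n + 1) := by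
    intro n
    induction n with
    | zero => simpa using h
    | succ n ih =>
      intro a
      obtain ⟨b, rfl⟩ := hM a
      simpa only [map_pow] using pow_sub_pow_mem_pow_add_two hpI (ih b)
  exact MonoidHom.ext <| congrFun <| IsHausdorff.StrictMono.funext' I
    (strictMono_id.add_const 1) fun n a => Ideal.Quotient.eq.mpr (key n a)

theorem RingHom.eq_of_apply_section_eq {R : Type*} [CommRing R] (hpI : (p : S) ∈ I)
    (τ : R ⧸ Ideal.span {(p : R)} → R) (hτ : ∀ x, Ideal.Quotient.mk _ (τ x) = x)
    {f g : R →+* S} (h : ∀ x, f (τ x) = g (τ x)) : f = g := by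
  have key : ∀ n x, f x - g x ∈ I ^ n := by
    intro n
    induction n with
    | zero => simp
    | succ n ih =>
      intro x
      obtain ⟨c, hc⟩ : (p : R) ∣ x - τ (Ideal.Quotient.mk _ x) := by
        rw [← Ideal.mem_span_singleton, ← Ideal.Quotient.eq, hτ]
      convert natCast_mul_mem_pow_succ hpI (ih c) using 1
      rw [sub_eq_iff_eq_add'.mp hc]
      simp only [map_add, map_mul, map_natCast, h]
      ring
  exact RingHom.ext <| congrFun <|
    IsHausdorff.funext' I fun n x => Ideal.Quotient.eq.mpr (key n x)

end Uniqueness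

section Teichmuller

variable {p : ℕ} {R : Type*} [CommRing R] [ExpChar (R ⧸ span {(p : R)}) p]
  [PerfectRing (R ⧸ span {(p : R)}) p]

noncomputable def teichmullerRoot (τ : R ⧸ span {(p : R)} →* R) : R →* R :=
  τ.comp (((frobeniusEquiv (R ⧸ span {(p : R)}) p).symm : R ⧸ span {(p : R)} →+* _).comp
    (Ideal.Quotient.mk _)).toMonoidHom

variable {τ : R ⧸ span {(p : R)} →* R} (hτ : ∀ x, Ideal.Quotient.mk _ (τ x) = x)
include hτ

theorem mk_teichmullerRoot_pow (x : R) :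
    Ideal.Quotient.mk (span {(p : R)}) (teichmullerRoot τ x) ^ p = Ideal.Quotient.mk _ x := by
  simp [teichmullerRoot, hτ, frobeniusEquiv_symm_pow_p]

theorem exists_eq_teichmullerRoot_pow_add_mul (x : R) :
    ∃ c, x = teichmullerRoot τ x ^ p + p * c := by
  obtain ⟨c, hc⟩ : (p : R) ∣ x - teichmullerRoot τ x ^ p := by
    rw [← mem_span_singleton, ← Ideal.Quotient.eq, map_pow, mk_teichmullerRoot_pow hτ]
  exact ⟨c, by linear_combination hc⟩

theorem natCast_dvd_teichmullerRoot_add (a b : R) :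
    (p : R) ∣ teichmullerRoot τ (a + b) - (teichmullerRoot τ a + teichmullerRoot τ b) := by
  rw [← mem_span_singleton, ← Ideal.Quotient.eq]
  simp [teichmullerRoot, hτ]

end Teichmuller

theorem teichmuller_hom_general (p : ℕ) [Fact p.Prime]
    (R : Type*) [CommRing R]
    (htf : ∀ x : R, (p : R) * x = 0 → x = 0)
    [CharP (R ⧸ Ideal.span {(p : R)}) p]
    [PerfectRing (R ⧸ Ideal.span {(p : R)}) p]
    (τ : (R ⧸ Ideal.span {(p : R)}) →* R)
    (hτ : ∀ x, Ideal.Quotient.mk (Ideal.span {(p : R)}) (τ x) = x)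
    (S : Type*) [CommRing S] [IsAdicComplete (Ideal.span {(p : S)}) S]
    (t : (R ⧸ Ideal.span {(p : R)}) →* S)
    (ht : ∀ x y, Ideal.Quotient.mk (Ideal.span {(p : S)}) (t (x + y)) =
      Ideal.Quotient.mk (Ideal.span {(p : S)}) (t x) +
      Ideal.Quotient.mk (Ideal.span {(p : S)}) (t y)) :
    ∃! T : R →+* S,
      (∀ x, T (τ x) = t x) ∧
      (∀ n : ℕ, ∃ m : ℕ, ∀ x : R, (p : R) ^ m ∣ x → (p : S) ^ n ∣ T x) := by
  have hpS : (p : S) ∈ span {(p : S)} := mem_span_singleton_self _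
  choose ρ hρ using exists_eq_teichmullerRoot_pow_add_mul hτ
  obtain ⟨T, hT⟩ := exists_ringHom_sub_mem Fact.out hpS
    (isLeftRegular_iff_right_eq_zero_of_mul.mpr htf) hρ (natCast_dvd_teichmullerRoot_add hτ)
    (t.isRingHomMod_comp ht (Ideal.Quotient.mk _)) fun x => by
      rw [← map_pow, mk_teichmullerRoot_pow hτ, sub_self]
      exact zero_mem _
  have hTτ : ∀ x, T (τ x) = t x := DFunLike.congr_fun <|
    MonoidHom.eq_of_sub_mem_of_surjective_pow PerfectRing.bijective_frobenius.surjective hpS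
      (u := (T : R →* S).comp τ) fun a => by simpa [hτ] using hT (τ a)
  refine ⟨T, ⟨hTτ, fun n => ⟨n, fun x hx => by simpa using map_dvd T hx⟩⟩,
    fun T' hT' => ?_⟩
  exact RingHom.eq_of_apply_section_eq hpS τ hτ fun x => by rw [hT'.1, hTτ]

/-- Let `R` be a strict `p`-ring (a `p`-torsion-free, `p`-adically complete ring whose
quotient `R/(p)` is perfect of characteristic `p`), with Teichmüller section
`τ : R/(p) → R`.  Let `S` be a `p`-adically complete ring and `t : R/(p) → S` a
multiplicative map whose composition with the projection `S → S/(p)` is a ring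
homomorphism.  Then there is a unique `p`-adically continuous ring homomorphism
`T : R → S` (sending `Σ pⁿ [x̄ₙ]` to `Σ pⁿ t(x̄ₙ)`) with `T ∘ τ = t`. -/
theorem teichmuller_hom (p : ℕ) [Fact p.Prime]
    (R : Type*) [CommRing R]
    (htf : ∀ x : R, (p : R) * x = 0 → x = 0)
    [IsAdicComplete (Ideal.span {(p : R)}) R]
    [CharP (R ⧸ Ideal.span {(p : R)}) p]
    [PerfectRing (R ⧸ Ideal.span {(p : R)}) p]
    (τ : (R ⧸ Ideal.span {(p : R)}) →* R)
    (hτ : ∀ x, Ideal.Quotient.mk (Ideal.span {(p : R)}) (τ x) = x)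
    (S : Type*) [CommRing S] [IsAdicComplete (Ideal.span {(p : S)}) S]
    (t : (R ⧸ Ideal.span {(p : R)}) →* S)
    (ht : ∀ x y, Ideal.Quotient.mk (Ideal.span {(p : S)}) (t (x + y)) =
      Ideal.Quotient.mk (Ideal.span {(p : S)}) (t x) +
      Ideal.Quotient.mk (Ideal.span {(p : S)}) (t y)) :
    ∃! T : R →+* S,
      (∀ x, T (τ x) = t x) ∧
      (∀ n : ℕ, ∃ m : ℕ, ∀ x : R, (p : R) ^ m ∣ x → (p : S) ^ n ∣ T x) :=
  teichmuller_hom_general p R htf τ hτ S t ht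
end

section
/- The functor R ↦ R/(p) from strict p-rings to perfect rings of characteristic p is an equivalence of categories. -/
/-!
Two maps `A → B` of strict `p`-rings that agree mod `p` agree mod every `p ^ n`: as `A/(p)` is
perfect, every `a` is `c ^ p + p d`, and `x ≡ y [p ^ n]` implies `x ^ p ≡ y ^ p [p ^ (n + 1)]`.
For existence, Fontaine's `θ` lifts any `k →+* C/(p)`, with `k` perfect and `C` `p`-adically
complete, to `W(k) →+* C`. For `C = A` and the identity of `A/(p)` this lift is an isomorphism
`W(A/(p)) ≃ A`: surjective since it is so mod `p` and `W(A/(p))` is complete, injective since its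
kernel lies in `(p)`, `A` is `p`-torsion free and `W(A/(p))` is `p`-adically separated.
Essential surjectivity is witnessed by `W(Q)`.
-/

open Ideal

theorem IsHausdorff.eq_of_forall_pow_dvd_sub {R : Type*} [CommRing R] {a : R}
    [IsHausdorff (span {a}) R] {x y : R} (h : ∀ n, a ^ n ∣ x - y) : x = y := by
  rw [IsHausdorff.eq_iff_smodEq (I := span {a})]
  intro n
  simpa [SModEq.sub_mem, span_singleton_pow, mem_span_singleton] using h n

theorem pow_succ_dvd_pow_sub_pow {R : Type*} [CommRing R] {p m : ℕ} {x y : R} (hm : m ≠ 0)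
    (h : (p : R) ^ m ∣ x - y) : (p : R) ^ (m + 1) ∣ x ^ p - y ^ p := by
  rw [← geom_sum₂_mul, pow_succ']
  exact mul_dvd_mul (dvd_geom_sum₂_self ((dvd_pow_self _ hm).trans h)) h

theorem RingHom.injective_of_ker_le_span {S T : Type*} [CommRing S] [CommRing T] (φ : S →+* T)
    {a : S} [IsHausdorff (span {a}) S] (ha : ∀ y, φ a * y = 0 → y = 0)
    (hker : RingHom.ker φ ≤ span {a}) : Function.Injective φ := by
  have pow_dvd : ∀ n x, φ x = 0 → a ^ n ∣ x := by
    intro n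
    induction n with
    | zero => simp
    | succ n ih =>
      intro x hx
      obtain ⟨z, rfl⟩ := mem_span_singleton.mp (hker hx)
      rw [map_mul] at hx
      exact pow_succ' a n ▸ mul_dvd_mul_left a (ih z (ha _ hx))
  refine (injective_iff_map_eq_zero φ).mpr fun x hx => ?_
  exact IsHausdorff.eq_of_forall_pow_dvd_sub (a := a) fun n => by simpa using pow_dvd n x hx

section

variable {p : ℕ} {A B : Type*} [CommRing A] [CommRing B] [ExpChar (A ⧸ span {(p : A)}) p]

theorem RingHom.pow_dvd_sub_of_dvd_sub
    (hF : Function.Surjective (frobenius (A ⧸ span {(p : A)}) p)) {f g : A →+* B}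
    (h : ∀ a, (p : B) ∣ f a - g a) (n : ℕ) (a : A) : (p : B) ^ (n + 1) ∣ f a - g a := by
  induction n generalizing a with
  | zero => simpa using h a
  | succ n ih =>
    obtain ⟨c', hc'⟩ := hF (Ideal.Quotient.mk _ a)
    obtain ⟨c, rfl⟩ := Ideal.Quotient.mk_surjective c'
    obtain ⟨d, hd⟩ : (p : A) ∣ a - c ^ p := by
      rw [← mem_span_singleton, ← Ideal.Quotient.eq, map_pow, ← hc', frobenius_def]
    have hsplit : f a - g a = (f c ^ p - g c ^ p) + p * (f d - g d) := by
      rw [eq_add_of_sub_eq' hd]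
      simp only [map_add, map_mul, map_pow, map_natCast]
      ring
    rw [hsplit]
    refine dvd_add (pow_succ_dvd_pow_sub_pow n.succ_ne_zero (ih c)) ?_
    rw [pow_succ']
    exact mul_dvd_mul_left _ (ih d)

theorem RingHom.eq_of_dvd_sub [IsHausdorff (span {(p : B)}) B]
    (hF : Function.Surjective (frobenius (A ⧸ span {(p : A)}) p)) {f g : A →+* B}
    (h : ∀ a, (p : B) ∣ f a - g a) : f = g :=
  RingHom.ext fun a => IsHausdorff.eq_of_forall_pow_dvd_sub fun n =>
    (pow_dvd_pow _ n.le_succ).trans (RingHom.pow_dvd_sub_of_dvd_sub hF h n a)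

end

namespace WittVector

variable {p : ℕ} [Fact p.Prime] {C : Type*} [CommRing C] [Fact ¬IsUnit (p : C)]
  [IsAdicComplete (span {(p : C)}) C] {k : Type*} [CommRing k] [CharP k p] [PerfectRing k p]

/-- As `k` is perfect, `g` factors through the tilt `C♭` of `C`, the source of Fontaine's `θ`. -/
noncomputable def liftModP (g : k →+* C ⧸ span {(p : C)}) : WittVector p k →+* C :=
  (fontaineTheta C p).comp (map (Perfection.lift p k (ModP C p) g))

theorem mk_liftModP (g : k →+* C ⧸ span {(p : C)}) (x : WittVector p k) :
    Ideal.Quotient.mk _ (liftModP g x) = g (x.coeff 0) := by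
  rw [liftModP, RingHom.comp_apply, mk_fontaineTheta]
  rfl

variable [PerfectRing (C ⧸ span {(p : C)}) p]

theorem liftModP_id_surjective :
    Function.Surjective (liftModP (p := p) (RingHom.id (C ⧸ span {(p : C)}))) := by
  have : IsHausdorff ((span {(p : WittVector p (C ⧸ span {(p : C)}))}).map
      (liftModP (RingHom.id _))) C := by
    rw [map_span, Set.image_singleton, map_natCast]
    infer_instance
  refine surjective_of_mk_map_comp_surjective _ (I := span {(p : WittVector p _)}) ?_
  rw [map_span, Set.image_singleton, map_natCast]
  intro y
  obtain ⟨x, rfl⟩ := Ideal.Quotient.mk_surjective y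
  exact ⟨teichmuller p (Ideal.Quotient.mk _ x), by simp [mk_liftModP]⟩

theorem liftModP_id_injective (htf : ∀ x : C, (p : C) * x = 0 → x = 0) :
    Function.Injective (liftModP (p := p) (RingHom.id (C ⧸ span {(p : C)}))) := by
  refine RingHom.injective_of_ker_le_span _ (fun y hy => htf _ (by rwa [map_natCast] at hy)) ?_
  intro x hx
  rw [mem_span_p_iff_coeff_zero_eq_zero, ← RingHom.id_apply (x.coeff 0), ← mk_liftModP, hx,
    map_zero]

end WittVector

theorem not_isUnit_natCast_of_charP_quotient {C : Type*} [CommRing C] {p : ℕ} (hp : p ≠ 1)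
    [CharP (C ⧸ span {(p : C)}) p] : ¬IsUnit (p : C) := by
  have := CharP.nontrivial_of_char_ne_one (R := C ⧸ span {(p : C)}) hp
  rw [← span_singleton_eq_top]
  exact Ideal.Quotient.nontrivial_iff.mp this

theorem Ideal.span_natCast_le_comap {A B : Type*} [CommRing A] [CommRing B] (f : A →+* B)
    (n : ℕ) : span {(n : A)} ≤ (span {(n : B)}).comap f :=
  map_le_iff_le_comap.mp (by rw [map_span, Set.image_singleton, map_natCast])

open WittVector in
theorem quotientMap_span_natCast_bijective {p : ℕ} [Fact p.Prime] {A B : Type*} [CommRing A]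
    [CommRing B]    (htf : ∀ x : A, (p : A) * x = 0 → x = 0) [IsAdicComplete (span {(p : A)}) A]
    [CharP (A ⧸ span {(p : A)}) p] [PerfectRing (A ⧸ span {(p : A)}) p]
    [IsAdicComplete (span {(p : B)}) B] [CharP (B ⧸ span {(p : B)}) p] :
    Function.Bijective fun f : A →+* B =>
      quotientMap (span {(p : B)}) f (span_natCast_le_comap f p) := by
  have hp : p ≠ 1 := (Fact.out : p.Prime).ne_one
  have : Fact ¬IsUnit (p : A) := ⟨not_isUnit_natCast_of_charP_quotient hp⟩
  have : Fact ¬IsUnit (p : B) := ⟨not_isUnit_natCast_of_charP_quotient hp⟩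
  refine ⟨fun f g hfg => RingHom.eq_of_dvd_sub (frobeniusEquiv _ p).surjective fun a => ?_,
    fun g => ?_⟩
  · have := congr($hfg (Ideal.Quotient.mk _ a))
    simpa [Ideal.Quotient.eq, mem_span_singleton] using this
  · let e := RingEquiv.ofBijective _ ⟨liftModP_id_injective htf, liftModP_id_surjective⟩
    refine ⟨(liftModP g).comp e.symm.toRingHom,
      Ideal.Quotient.ringHom_ext (RingHom.ext fun a => ?_)⟩
    have : (e.symm a).coeff 0 = Ideal.Quotient.mk _ a :=
      (mk_liftModP (RingHom.id _) (e.symm a)).symm.trans (congrArg _ (e.apply_symm_apply a))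
    simp [mk_liftModP, this]

/-- The functor `R ↦ R/(p)` from strict `p`-rings to perfect rings of characteristic `p`
is an equivalence of categories: it is fully faithful (base change `R →+* S` to
`R/(p) →+* S/(p)` is bijective on homomorphisms) and essentially surjective (every perfect
ring of characteristic `p` arises, up to isomorphism, as `R/(p)` for a strict `p`-ring `R`). -/
theorem strictPRing_equiv_perfect (p : ℕ) [Fact p.Prime] :
    (∀ (A B : Type) [CommRing A] [CommRing B],
      (∀ x : A, (p : A) * x = 0 → x = 0) → IsAdicComplete (Ideal.span {(p : A)}) A →
      ∀ [CharP (A ⧸ Ideal.span {(p : A)}) p] [PerfectRing (A ⧸ Ideal.span {(p : A)}) p],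
      (∀ x : B, (p : B) * x = 0 → x = 0) → IsAdicComplete (Ideal.span {(p : B)}) B →
      ∀ [CharP (B ⧸ Ideal.span {(p : B)}) p] [PerfectRing (B ⧸ Ideal.span {(p : B)}) p],
      Function.Bijective (fun f : A →+* B =>
        Ideal.quotientMap (Ideal.span {(p : B)}) f
          (by
            rw [Ideal.span_le]
            intro x hx
            rw [Set.mem_singleton_iff] at hx
            subst hx
            refine Ideal.mem_comap.mpr ?_
            rw [map_natCast f p]
            exact Ideal.subset_span (Set.mem_singleton ((p : B))))))
    ∧
    (∀ (Q : Type) [CommRing Q] [CharP Q p] [PerfectRing Q p],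
      ∃ (R : Type) (_ : CommRing R),
        (∀ x : R, (p : R) * x = 0 → x = 0) ∧
        IsAdicComplete (Ideal.span {(p : R)}) R ∧
        Nonempty ((R ⧸ Ideal.span {(p : R)}) ≃+* Q)) := by
  refine ⟨fun A B _ _ htfA _ _ _ _ _ _ _ => quotientMap_span_natCast_bijective htfA,
    fun Q _ _ _ => ⟨WittVector p Q, inferInstance, fun x hx => ?_, inferInstance,
      ⟨WittVector.quotientPEquiv⟩⟩⟩
  exact WittVector.eq_zero_of_p_mul_eq_zero x (by rwa [mul_comm])
end

section
/- Let K be an analytic field of mixed characteristics and let o_{K'} = lim← o_K/(p) under Frobenius, with norm |x̄|' = |θ(x̄)| where θ is the multiplicative lift of the projection to o_K/(p). Then for x̄, ȳ ∈ o_{K'}, x̄ is divisible by ȳ if and only if |x̄|' ≤ |ȳ|'. -/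
open scoped NNReal

set_option synthInstance.maxHeartbeats 1000000
set_option maxHeartbeats 1000000

/-- The valuation ring `o_K` of an analytic field `K` (a field complete with respect to a
multiplicative nonarchimedean norm, given by a rank-one valuation). -/
noncomputable abbrev OK (K : Type*) [Field K] [Valued K ℝ≥0] : Subring K :=
  Valued.v.integer

/-- `o_K/(p)`. -/
abbrev OKmodp (p : ℕ) (K : Type*) [Field K] [Valued K ℝ≥0] : Type _ :=
  OK K ⧸ Ideal.span {(p : OK K)}

/-- `K` is discretely valued: the norm group is generated by a single `γ < 1`. -/
def IsDiscretelyValued (K : Type*) [Field K] [Valued K ℝ≥0] : Prop :=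
  ∃ γ : ℝ≥0, γ < 1 ∧ ∀ x : K, x ≠ 0 → ∃ n : ℤ, Valued.v x = γ ^ n

theorem charP_OKmodp (p : ℕ) [Fact p.Prime] (K : Type*) [Field K] [Valued K ℝ≥0]
    (hp : Valued.v (p : K) = (p : ℝ≥0)⁻¹) : CharP (OKmodp p K) p := by
  refine CharP.quotient _ p ?_
  intro hu
  rcases isUnit_iff_exists_inv.mp hu with ⟨u, huu⟩
  have hcast : (((p : OK K) * u : OK K) : K) = (1 : K) := by rw [huu]; rfl
  have hple : ((p : OK K) : K) = (p : K) := by push_cast; ring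
  have hu1 : Valued.v ((u : K)) ≤ 1 := u.2
  have h1 : Valued.v ((p : K)) * Valued.v ((u : K)) = 1 := by
    rw [← hple, ← Valued.v.map_mul]
    rw [show ((p : OK K) : K) * ((u : K)) = (((p : OK K) * u : OK K) : K) from rfl, hcast]
    exact Valued.v.map_one
  rw [hp] at h1
  have hp1 : ((p : ℝ≥0))⁻¹ < 1 := by
    have h2 : (1 : ℝ≥0) < (p : ℝ≥0) := by
      exact_mod_cast Nat.one_lt_cast.mpr (Fact.out : p.Prime).one_lt
    exact inv_lt_one_of_one_lt₀ h2
  have : (p : ℝ≥0)⁻¹ * Valued.v ((u : K)) ≤ (p : ℝ≥0)⁻¹ * 1 := by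
    first
      | exact mul_le_mul_of_nonneg_left hu1 (zero_le _)
      | gcongr
  rw [h1] at this
  simp at this
  exact absurd (lt_of_le_of_lt this hp1) (lt_irrefl _)

/-- The tilt `o_{K'} = lim← o_K/(p)` (inverse limit under Frobenius), realized as a subring
of the product ring `Π_n o_K/(p)`. -/
noncomputable def TiltRing (p : ℕ) [Fact p.Prime] (K : Type*) [Field K] [Valued K ℝ≥0]
    (hp : Valued.v (p : K) = (p : ℝ≥0)⁻¹) : Subring (∀ _ : ℕ, OKmodp p K) where
  carrier := {x | ∀ n, x (n + 1) ^ p = x n}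
  zero_mem' := by
    intro n
    simp only [Pi.zero_apply]
    exact zero_pow (Fact.out : p.Prime).ne_zero
  one_mem' := by intro n; simp
  add_mem' := by
    haveI := charP_OKmodp p K hp
    intro a b ha hb n
    simp only [Pi.add_apply]
    rw [add_pow_char, ha n, hb n]
  mul_mem' := by
    intro a b ha hb n
    simp only [Pi.mul_apply]
    rw [mul_pow, ha n, hb n]
  neg_mem' := by
    haveI := charP_OKmodp p K hp
    intro a ha n
    simp only [Pi.neg_apply]
    rw [show (-(a (n+1))) = (-1) * a (n+1) by ring, mul_pow, neg_one_pow_char, ha n]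
    ring

/-- The defining property of the tilt norm `|x̄|' = |θ(x̄)|`: it vanishes at `0`, and
for `x̄ = (x̄_n)_n` in the tilt, `|x̄|' = |x_n|^(p^n)` for any lift `x_n ∈ o_K` of the
`n`-th component `x̄_n` whose norm exceeds `|p| = p⁻¹`. -/
def IsTiltNorm (p : ℕ) [Fact p.Prime] (K : Type*) [Field K] [Valued K ℝ≥0]
    (hp : Valued.v (p : K) = (p : ℝ≥0)⁻¹)
    (N : TiltRing p K hp → ℝ≥0) : Prop :=
  N 0 = 0 ∧
  ∀ (x : TiltRing p K hp) (n : ℕ) (xn : OK K),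
    Ideal.Quotient.mk (Ideal.span {(p : OK K)}) xn = x.val n →
    (p : ℝ≥0)⁻¹ < Valued.v (xn : K) →
    N x = Valued.v (xn : K) ^ (p ^ n)

/-!
Since `|p| < 1` and `K` is complete, `o_K` is `p`-adically complete, so by the Teichmüller
construction every `x̄` in the tilt is the reduction of a compatible system `(X_n)` of `p`-power
roots in `o_K`. Then `|x̄|' = |X_n|^(p^n) = |X_0|` for any `n` with `|X_n| > |p|` (and both sides
vanish if there is none), so `|·|'` is the multiplicative function `|x̄^♯|`. Divisibility
`ȳ ∣ x̄` gives `|x̄|' = |ȳ|' |z̄|' ≤ |ȳ|'`; conversely `|X_0| ≤ |Y_0|` forces `|X_n| ≤ |Y_n|` for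
all `n`, and `(X_n / Y_n)` is again a compatible system in `o_K` whose reduction is the quotient.
-/

open Filter Topology

theorem Nat.Prime.nnreal_inv_lt_one {p : ℕ} (hp : p.Prime) : (p : ℝ≥0)⁻¹ < 1 :=
  inv_lt_one_of_one_lt₀ (by exact_mod_cast hp.one_lt)

instance Valued.nonarchimedeanAddGroup {R Γ₀ : Type*} [Ring R] [LinearOrderedCommGroupWithZero Γ₀]
    [Valued R Γ₀] : NonarchimedeanAddGroup R where
  is_nonarchimedean U hU := by
    obtain ⟨γ, hγ⟩ := Valued.mem_nhds_zero.mp hU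
    exact ⟨⟨Valued.v.restrict.ltAddSubgroup γ, Valued.isOpen_ball R γ.1⟩, hγ⟩

section ValuedField

variable {K : Type*} [Field K] [Valued K ℝ≥0]

theorem Valued.isClosed_setOf_le (r : ℝ≥0) : IsClosed {x : K | Valued.v x ≤ r} := by
  refine isOpen_compl_iff.mp (isOpen_iff_mem_nhds.mpr fun x hx => ?_)
  have hx : r < Valued.v x := not_le.mp hx
  filter_upwards [Valued.locally_const (hx.trans_le' zero_le).ne'] with y hy
  exact not_le.mpr (hy ▸ hx)

theorem Valued.tendsto_zero_of_le {ι : Type*} {l : Filter ι} {f : ι → K} {ε : ι → ℝ≥0}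
    (hε : Tendsto ε l (𝓝 0)) (hf : ∀ i, Valued.v (f i) ≤ ε i) : Tendsto f l (𝓝 0) := by
  refine (Valued.hasBasis_nhds_zero K ℝ≥0).tendsto_right_iff.mpr fun γ _ => ?_
  have hγ : 0 < MonoidWithZeroHom.ValueGroup₀.embedding γ.1 :=
    pos_iff_ne_zero.mpr
      ((map_ne_zero_iff _ MonoidWithZeroHom.ValueGroup₀.embedding_injective).mpr γ.ne_zero)
  filter_upwards [hε.eventually (gt_mem_nhds hγ)] with i hi
  rw [Valuation.restrict_lt_iff_lt_embedding]
  exact (hf i).trans_lt hi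

namespace OK

theorem mem_span_singleton_pow_iff {π a : OK K} {n : ℕ} :
    a ∈ Ideal.span {π} ^ n ↔ Valued.v (a : K) ≤ Valued.v (π : K) ^ n := by
  rw [Ideal.span_singleton_pow, Ideal.mem_span_singleton,
    (Valuation.integer.integers _).dvd_iff_le, map_pow, map_pow]
  rfl

theorem smodEq_span_singleton_pow_iff {π a b : OK K} {n : ℕ} :
    a ≡ b [SMOD (Ideal.span {π} ^ n • ⊤ : Ideal (OK K))] ↔
      Valued.v ((a : K) - b) ≤ Valued.v (π : K) ^ n := by
  rw [SModEq.sub_mem, smul_eq_mul, Ideal.mul_top, mem_span_singleton_pow_iff]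
  rfl

theorem isAdicComplete_span_singleton [CompleteSpace K] {π : OK K}
    (hπ : Valued.v (π : K) < 1) :
    IsAdicComplete (Ideal.span {π}) (OK K) where
  haus' a ha := by
    simp only [smodEq_span_singleton_pow_iff, ZeroMemClass.coe_zero, sub_zero] at ha
    have := ge_of_tendsto' (tendsto_pow_atTop_nhds_zero_of_lt_one zero_le hπ) ha
    exact Subtype.ext ((Valuation.zero_iff _).mp (nonpos_iff_eq_zero.mp this))
  prec' f hf := by
    simp only [smodEq_span_singleton_pow_iff] at hf ⊢
    have hcauchy : CauchySeq fun n => (f n : K) :=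
      NonarchimedeanAddGroup.cauchySeq_of_tendsto_sub_nhds_zero <|
        Valued.tendsto_zero_of_le (tendsto_pow_atTop_nhds_zero_of_lt_one zero_le hπ) fun n => by
          rw [Valuation.map_sub_swap]; exact hf n.le_succ
    obtain ⟨L, hL⟩ := cauchySeq_tendsto_of_complete hcauchy
    have hLf (n : ℕ) : Valued.v ((f n : K) - L) ≤ Valued.v (π : K) ^ n :=
      ((Valued.isClosed_setOf_le _).preimage (continuous_const.sub continuous_id (X := K)))
        |>.mem_of_tendsto hL (eventually_atTop.mpr ⟨n, fun m hm => hf hm⟩)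
    have hL1 : Valued.v L ≤ 1 :=
      (Valued.isClosed_setOf_le 1).mem_of_tendsto hL (Eventually.of_forall fun n => (f n).2)
    exact ⟨⟨L, hL1⟩, hLf⟩

end OK

end ValuedField

theorem Valuation.mul_div_cancel_of_le {K Γ₀ : Type*} [Field K]
    [LinearOrderedCommGroupWithZero Γ₀] (v : Valuation K Γ₀) {a b : K} (h : v a ≤ v b) :
    b * (a / b) = a := by
  rcases eq_or_ne b 0 with rfl | hb
  · rw [map_zero, le_zero_iff, v.zero_iff] at h
    simp [h]
  · exact mul_div_cancel₀ a hb

namespace Perfection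

open Valued

variable {p : ℕ} {K : Type*} [Field K] [Valued K ℝ≥0]

theorem valuation_coeff_pow (X : Perfection (OK K) p) (n : ℕ) :
    v (coeffMonoidHom (OK K) p n X : K) ^ p ^ n = v (coeffMonoidHom (OK K) p 0 X : K) := by
  rw [← map_pow, ← SubmonoidClass.coe_pow, coeffMonoidHom_pow_p_pow_self]

theorem valuation_coeff_zero_eq_zero (hp : 1 < p) {X : Perfection (OK K) p} {r : ℝ≥0}
    (hr : r < 1) (hX : ∀ n, v (coeffMonoidHom (OK K) p n X : K) ≤ r) :
    v (coeffMonoidHom (OK K) p 0 X : K) = 0 := by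
  have hsmall (n : ℕ) : v (coeffMonoidHom (OK K) p 0 X : K) ≤ r ^ n :=
    calc v (coeffMonoidHom (OK K) p 0 X : K)
        = v (coeffMonoidHom (OK K) p n X : K) ^ p ^ n := (valuation_coeff_pow X n).symm
      _ ≤ r ^ p ^ n := pow_le_pow_left₀ zero_le (hX n) _
      _ ≤ r ^ n :=
        pow_le_pow_of_le_one zero_le hr.le (Nat.lt_pow_self hp).le
  exact nonpos_iff_eq_zero.mp <|
    ge_of_tendsto' (tendsto_pow_atTop_nhds_zero_of_lt_one zero_le hr) hsmall

theorem dvd_of_valuation_coeff_zero_le [NeZero p] {X Y : Perfection (OK K) p}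
    (h : v (coeffMonoidHom (OK K) p 0 X : K) ≤ v (coeffMonoidHom (OK K) p 0 Y : K)) : Y ∣ X := by
  have hle (n : ℕ) :
      v (coeffMonoidHom (OK K) p n X : K) ≤ v (coeffMonoidHom (OK K) p n Y : K) := by
    rwa [← pow_le_pow_iff_left₀ zero_le zero_le (pow_ne_zero n (NeZero.ne p)),
      valuation_coeff_pow, valuation_coeff_pow]
  let W : Perfection (OK K) p :=
    ⟨fun n => ⟨(coeffMonoidHom (OK K) p n X : K) / coeffMonoidHom (OK K) p n Y,
        (map_div₀ (v : Valuation K ℝ≥0) _ _).trans_le (div_le_one_of_le₀ (hle n) zero_le)⟩,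
      fun n => Subtype.ext <| (SubmonoidClass.coe_pow _ p).trans <| by
        rw [div_pow, ← SubmonoidClass.coe_pow, ← SubmonoidClass.coe_pow, coeffMonoidHom_pow_p',
          coeffMonoidHom_pow_p']⟩
  exact ⟨W, extMonoid fun n => Subtype.ext (v.mul_div_cancel_of_le (hle n)).symm⟩

end Perfection

namespace TiltRing

open Perfection Valued

variable {p : ℕ} [Fact p.Prime] {K : Type*} [Field K] [Valued K ℝ≥0]
  {hp : v (p : K) = (p : ℝ≥0)⁻¹}

variable (hp) in
noncomputable def ofPerfection : Perfection (OK K) p →* TiltRing p K hp where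
  toFun X := ⟨fun n => Ideal.Quotient.mk _ (coeffMonoidHom (OK K) p n X),
    fun n => by rw [← map_pow, coeffMonoidHom_pow_p']⟩
  map_one' := Subtype.ext <| funext fun n => by simp
  map_mul' X Y := Subtype.ext <| funext fun n => by simp

theorem ofPerfection_apply (X : Perfection (OK K) p) (n : ℕ) :
    (ofPerfection hp X).val n = Ideal.Quotient.mk _ (coeffMonoidHom (OK K) p n X) := rfl

theorem ofPerfection_surjective [CompleteSpace K] :
    Function.Surjective (ofPerfection (p := p) (K := K) hp) := by
  intro u
  have := charP_OKmodp p K hp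
  have := OK.isAdicComplete_span_singleton (π := (p : OK K)) <| by
    rw [SubringClass.coe_natCast, hp]
    exact (Fact.out : p.Prime).nnreal_inv_lt_one
  let u' : Perfection (OKmodp p K) p := ⟨u.val, u.2⟩
  refine ⟨(quotientMulEquiv p _).symm u', Subtype.ext <| funext fun n => ?_⟩
  rw [ofPerfection_apply, ← coeff_quotientMulEquiv, MulEquiv.apply_symm_apply]
  rfl

theorem _root_.IsTiltNorm.apply_ofPerfection {N : TiltRing p K hp → ℝ≥0}
    (hN : IsTiltNorm p K hp N) (X : Perfection (OK K) p) :
    N (ofPerfection hp X) = v (coeffMonoidHom (OK K) p 0 X : K) := by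
  by_cases hX : ∃ n, (p : ℝ≥0)⁻¹ < v (coeffMonoidHom (OK K) p n X : K)
  · obtain ⟨n, hn⟩ := hX
    rw [hN.2 _ n _ rfl hn, valuation_coeff_pow]
  push Not at hX
  have hzero : ofPerfection hp X = 0 := by
    refine Subtype.ext <| funext fun n => Ideal.Quotient.eq_zero_iff_mem.mpr ?_
    rw [← pow_one (Ideal.span _), OK.mem_span_singleton_pow_iff, pow_one,
      SubringClass.coe_natCast, hp]
    exact hX n
  have hprime : p.Prime := Fact.out
  rw [hzero, hN.1, valuation_coeff_zero_eq_zero hprime.one_lt hprime.nnreal_inv_lt_one hX]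

end TiltRing

/-- Divisibility in the tilt `o_{K'}` is governed by the norm: for `x̄, ȳ ∈ o_{K'}`,
`ȳ` divides `x̄` if and only if `|x̄|' ≤ |ȳ|'`. -/
theorem tilt_dvd_iff_norm_le (p : ℕ) [Fact p.Prime] (K : Type*) [Field K] [Valued K ℝ≥0]
    [CompleteSpace K] (hp : Valued.v (p : K) = (p : ℝ≥0)⁻¹)
    (N : TiltRing p K hp → ℝ≥0) (hN : IsTiltNorm p K hp N)
    (x y : TiltRing p K hp) :
    y ∣ x ↔ N x ≤ N y := by
  obtain ⟨X, rfl⟩ := TiltRing.ofPerfection_surjective x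
  obtain ⟨Y, rfl⟩ := TiltRing.ofPerfection_surjective y
  rw [hN.apply_ofPerfection, hN.apply_ofPerfection]
  refine ⟨fun ⟨z, hz⟩ => ?_, fun h => map_dvd _ (Perfection.dvd_of_valuation_coeff_zero_le h)⟩
  obtain ⟨Z, rfl⟩ := TiltRing.ofPerfection_surjective z
  rw [← hN.apply_ofPerfection X, hz, ← map_mul, hN.apply_ofPerfection, map_mul, Subring.coe_mul,
    map_mul]
  exact mul_le_of_le_one_right' (Perfection.coeffMonoidHom (OK K) p 0 Z).2
end

section
/- Let K be an analytic field of mixed characteristics, not discretely valued, such that there exists ξ ∈ K with p^{-1} ≤ |ξ| < 1 and Frobenius surjective on o_K/(ξ). Then K is perfectoid, i.e., Frobenius is surjective on o_K/(p). -/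
open scoped NNReal

set_option synthInstance.maxHeartbeats 1000000
set_option maxHeartbeats 1000000

/-! Choose `π ∈ K` with `|ξ| ≤ |π|^p < 1`; it exists because the value group of `K` is dense,
and then `ξ ∈ (π^p)`. Approximate `p`-th roots improve: if `x ≡ y^p` modulo `(π^{pk}, p)`, write
the error as `π^{pk} a`, lift `a ≡ w^p` modulo `ξ`, and replace `y` by `y + π^k w`, using
`(y + u)^p ≡ y^p + u^p` modulo `p`; this gives `x ≡ (y + π^k w)^p` modulo `(π^{p(k+1)}, p)`.
Since `|π| < 1` and `p ≠ 0` in `K`, eventually `π^{pk} ∈ (p)`. -/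

theorem Ideal.Quotient.forall_exists_pow_eq_iff {R : Type*} [CommRing R] (I : Ideal R) (n : ℕ) :
    (∀ a : R ⧸ I, ∃ b, b ^ n = a) ↔ ∀ a : R, ∃ b, a - b ^ n ∈ I := by
  simp only [Ideal.Quotient.mk_surjective.forall, Ideal.Quotient.mk_surjective.exists, ← map_pow,
    Ideal.Quotient.eq, sub_mem_comm_iff]

theorem exists_sub_pow_mem_span_pair {R : Type*} [CommRing R] {p : ℕ} (hp : p.Prime) {ξ π : R}
    (hξ : π ^ p ∣ ξ) (hfrob : ∀ a : R, ∃ b, a - b ^ p ∈ Ideal.span {ξ}) (k : ℕ) (x : R) :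
    ∃ y, x - y ^ p ∈ Ideal.span {π ^ (p * k), (p : R)} := by
  induction k with
  | zero => exact ⟨0, by simp [Ideal.span_insert, Ideal.span_singleton_one]⟩
  | succ k ih =>
    obtain ⟨y, hy⟩ := ih
    obtain ⟨a, b, hab⟩ := Ideal.mem_span_pair.mp hy
    obtain ⟨w, hw⟩ := hfrob a
    obtain ⟨c, hc⟩ := Ideal.mem_span_singleton'.mp hw
    obtain ⟨d, rfl⟩ := hξ
    obtain ⟨r, hr⟩ := exists_add_pow_prime_eq hp y (π ^ k * w)
    refine ⟨y + π ^ k * w, Ideal.mem_span_pair.mpr ⟨c * d, b - y * (π ^ k * w) * r, ?_⟩⟩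
    rw [hr]
    linear_combination hab + π ^ (p * k) * hc

section

variable {K : Type*} [Field K] [Valued K ℝ≥0]

variable (K) in
noncomputable def valueGroup : Subgroup ℝ≥0ˣ :=
  (Units.map ((Valued.v : Valuation K ℝ≥0) : K →* ℝ≥0)).range

theorem mk0_valuation_mem_valueGroup {x : K} (hx : x ≠ 0) :
    Units.mk0 (Valued.v x) (Valued.v.ne_zero_iff.mpr hx) ∈ valueGroup K :=
  ⟨Units.mk0 x hx, Units.ext rfl⟩

theorem isDiscretelyValued_of_valueGroup_eq_closure {b : ℝ≥0ˣ} (hb : 1 < b)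
    (H : valueGroup K = Subgroup.closure {b}) : IsDiscretelyValued K := by
  refine ⟨((b⁻¹ : ℝ≥0ˣ) : ℝ≥0), Units.val_lt_val.mpr (inv_lt_one'.mpr hb), fun x hx => ?_⟩
  obtain ⟨n, hn⟩ := Subgroup.mem_closure_singleton.mp (H ▸ mk0_valuation_mem_valueGroup hx)
  refine ⟨-n, ?_⟩
  rw [← Units.val_zpow_eq_zpow_val, inv_zpow', neg_neg, hn, Units.val_mk0]

theorem isDiscretelyValued_of_valueGroup_eq_bot (H : valueGroup K = ⊥) : IsDiscretelyValued K := by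
  refine ⟨2⁻¹, by norm_num, fun x hx => ⟨0, ?_⟩⟩
  have hx' := mk0_valuation_mem_valueGroup hx
  rw [H, Subgroup.mem_bot, Units.ext_iff] at hx'
  simpa using hx'

theorem exists_lt_valuation_lt_one (hnd : ¬ IsDiscretelyValued K) {a : ℝ≥0} (ha : a < 1) :
    ∃ x : K, a < Valued.v x ∧ Valued.v x < 1 := by
  by_contra! h
  obtain ⟨a', ha'0, haa', ha'1⟩ : ∃ a', 0 < a' ∧ a ≤ a' ∧ a' < 1 :=
    ⟨max a 2⁻¹, by positivity, le_max_left _ _, max_lt ha (by norm_num)⟩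
  have hdisj : Disjoint (valueGroup K : Set ℝ≥0ˣ) (Set.Ioo 1 (Units.mk0 a' ha'0.ne')⁻¹) := by
    refine Set.disjoint_left.mpr ?_
    rintro _ ⟨y, rfl⟩ ⟨hy1, hya⟩
    have h1 : 1 < Valued.v (y : K) := Units.val_lt_val.mpr hy1
    have h2 : Valued.v (y : K) < a'⁻¹ := by simpa using Units.val_lt_val.mpr hya
    have hy' := h (y : K)⁻¹
    rw [map_inv₀] at hy'
    exact (hy' (haa'.trans_lt ((lt_inv_comm₀ (zero_lt_one.trans h1) ha'0).mp h2))).not_gt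
      (inv_lt_one_of_one_lt₀ h1)
  rcases eq_or_ne (valueGroup K) ⊥ with hbot | hbot
  · exact hnd (isDiscretelyValued_of_valueGroup_eq_bot hbot)
  · obtain ⟨b, hb⟩ := Subgroup.exists_isLeast_one_lt hbot
      (one_lt_inv'.mpr (Units.val_lt_val.mp ha'1)) hdisj
    exact hnd (isDiscretelyValued_of_valueGroup_eq_closure hb.1.2 (Subgroup.cyclic_of_min hb))

theorem exists_valuation_lt_one_le_pow (hnd : ¬ IsDiscretelyValued K) {t : ℝ≥0} (ht : t < 1)
    {n : ℕ} (hn : n ≠ 0) : ∃ π : K, t ≤ Valued.v π ^ n ∧ Valued.v π < 1 := by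
  obtain ⟨π, hπt, hπ1⟩ := exists_lt_valuation_lt_one hnd
    (NNReal.rpow_lt_one ht (by positivity : (0 : ℝ) < (n : ℝ)⁻¹))
  refine ⟨π, ?_, hπ1⟩
  calc t = (t ^ (n : ℝ)⁻¹) ^ n := (NNReal.rpow_inv_natCast_pow t hn).symm
    _ ≤ Valued.v π ^ n := by gcongr

theorem exists_pow_mem_span_singleton {ϖ c : OK K} (hϖ : Valued.v (ϖ : K) < 1)
    (hc : (c : K) ≠ 0) : ∃ k, ϖ ^ k ∈ Ideal.span {c} := by
  obtain ⟨k, hk⟩ := exists_pow_lt_of_lt_one (Valued.v.pos_iff.mpr hc) hϖ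
  refine ⟨k, Ideal.mem_span_singleton.mpr ((Valuation.integer.integers _).dvd_iff_le.mpr ?_)⟩
  change Valued.v ((ϖ : K) ^ k) ≤ Valued.v (c : K)
  rw [map_pow]
  exact hk.le

end

theorem perfectoid_of_frobenius_surjective_mod_xi_general (p : ℕ) [Fact p.Prime]
    (K : Type*) [Field K] [Valued K ℝ≥0]
    (hp : Valued.v (p : K) = (p : ℝ≥0)⁻¹)
    (hnd : ¬ IsDiscretelyValued K)
    (ξ : OK K) (hξ₂ : Valued.v (ξ : K) < 1)
    (hfrob : ∀ a : OK K ⧸ Ideal.span {ξ}, ∃ b, b ^ p = a) :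
    ∀ a : OKmodp p K, ∃ b, b ^ p = a := by
  have hp0 : p ≠ 0 := (Fact.out : p.Prime).ne_zero
  obtain ⟨π, hξπ, hπ1⟩ := exists_valuation_lt_one_le_pow hnd hξ₂ hp0
  let ϖ : OK K := ⟨π, hπ1.le⟩
  have hϖξ : ϖ ^ p ∣ ξ := by
    refine (Valuation.integer.integers _).dvd_iff_le.mpr ?_
    change Valued.v (ξ : K) ≤ Valued.v (π ^ p)
    rwa [map_pow]
  obtain ⟨k, hk⟩ := exists_pow_mem_span_singleton (ϖ := ϖ) (c := (p : OK K)) hπ1 (by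
    rw [← Valued.v.ne_zero_iff, SubringClass.coe_natCast, hp]
    positivity)
  have hspan : Ideal.span {ϖ ^ (p * k), (p : OK K)} = Ideal.span {(p : OK K)} := by
    rw [Ideal.span_insert, sup_eq_right, Ideal.span_singleton_le_iff_mem]
    exact Ideal.pow_mem_of_pow_mem _ hk (Nat.le_mul_of_pos_left k (Nat.pos_of_ne_zero hp0))
  rw [Ideal.Quotient.forall_exists_pow_eq_iff] at hfrob ⊢
  simpa only [hspan] using exists_sub_pow_mem_span_pair Fact.out hϖξ hfrob k

/-- If `K` is an analytic field of mixed characteristics, not discretely valued, and there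
is `ξ ∈ o_K` with `p⁻¹ ≤ |ξ| < 1` such that Frobenius is surjective on `o_K/(ξ)`, then
`K` is perfectoid, i.e. Frobenius is surjective on `o_K/(p)`. -/
theorem perfectoid_of_frobenius_surjective_mod_xi (p : ℕ) [Fact p.Prime]
    (K : Type*) [Field K] [Valued K ℝ≥0] [CompleteSpace K]
    (hp : Valued.v (p : K) = (p : ℝ≥0)⁻¹)
    (hnd : ¬ IsDiscretelyValued K)
    (ξ : OK K) (hξ₁ : (p : ℝ≥0)⁻¹ ≤ Valued.v (ξ : K)) (hξ₂ : Valued.v (ξ : K) < 1)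
    (hfrob : ∀ a : OK K ⧸ Ideal.span {ξ}, ∃ b, b ^ p = a) :
    ∀ a : OKmodp p K, ∃ b, b ^ p = a :=
  perfectoid_of_frobenius_surjective_mod_xi_general p K hp hnd ξ hξ₂ hfrob
end

section
/- Let F be a perfect analytic field of characteristic p and r > 0. The ring W^{r-}(F) = { x ∈ W(F) : |x|_r < ∞ } is complete with respect to the norm |·|_r. -/
/-!
The Witt subtraction polynomial `Sₙ` is isobaric of weight `pⁿ` when `X (b, m)` has weight `pᵐ`;
since `|·|` is nonarchimedean, this gives `|x - y|_r ≤ max |x|_r |y|_r`. Moreover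
`Sₙ = X (0, n) - X (1, n) + (a polynomial in the variables of index < n)`, so by induction on `n`
every coordinate sequence of a `|·|_r`-Cauchy sequence is Cauchy in `F`; let `L` be the vector of
coordinatewise limits. The bound `|x i - x j|_r ≤ ε` amounts to closed conditions on the
coordinates of `x i - x j`, so it passes to `|x i - L|_r ≤ ε`, and `|L|_r < ∞` follows from the
ultrametric inequality.
-/

open scoped NNReal ENNReal

set_option synthInstance.maxHeartbeats 1000000
set_option maxHeartbeats 1000000

/-- The Gauss norm `|Σ pⁿ [x̄_n]|_r = sup_n p⁻ⁿ (|x̄_n|')^r` on `W(F)` for `F` a perfect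
analytic field of characteristic `p`: in Witt coordinates the `n`-th Teichmüller
coordinate is `x̄_n = (x.coeff n)^(p⁻ⁿ)`, so `(|x̄_n|')^r = |x.coeff n|^(r·p⁻ⁿ)`.
The value is taken in `[0, +∞]`. -/
noncomputable def gaussNorm (p : ℕ) [Fact p.Prime] (F : Type*) [Field F] [Valued F ℝ≥0]
    (r : ℝ) (x : WittVector p F) : ℝ≥0∞ :=
  ⨆ n : ℕ, ((p : ℝ≥0∞)⁻¹ ^ n) *
    (((Valued.v (x.coeff n) : ℝ≥0) : ℝ≥0∞) ^ (r * ((p : ℝ)⁻¹ ^ n)))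

open MvPolynomial Filter Topology

theorem Valuation.map_intCast_le_one {R Γ₀ : Type*} [Ring R] [LinearOrderedCommMonoidWithZero Γ₀]
    (v : Valuation R Γ₀) (k : ℤ) : v k ≤ 1 := by
  induction k using Int.induction_on with
  | zero => simp
  | succ i ih => rw [Int.cast_add, Int.cast_one]; exact v.map_add_le ih v.map_one.le
  | pred i ih => rw [Int.cast_sub, Int.cast_one]; exact v.map_sub_le ih v.map_one.le

theorem Valuation.map_aeval_le_pow_of_isWeightedHomogeneous {R Γ₀ σ : Type*} [CommRing R]
    [LinearOrderedCommMonoidWithZero Γ₀] (v : Valuation R Γ₀) {w : σ → ℕ}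
    {φ : MvPolynomial σ ℤ} {m : ℕ} (hφ : φ.IsWeightedHomogeneous w m) {g : σ → R} {K : Γ₀}
    (hg : ∀ i, w i ≤ m → v (g i) ≤ K ^ w i) : v (aeval g φ) ≤ K ^ m := by
  rw [aeval_def, eval₂_eq]
  refine v.map_sum_le fun d hd => ?_
  have hwd : Finsupp.weight w d = m := hφ (mem_support_iff.1 hd)
  have hcoeff : v (algebraMap ℤ R (coeff d φ)) ≤ 1 := by
    rw [eq_intCast]
    exact v.map_intCast_le_one _
  calc v (algebraMap ℤ R (coeff d φ) * ∏ i ∈ d.support, g i ^ d i)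
      ≤ 1 * ∏ i ∈ d.support, (K ^ w i) ^ d i := by
        rw [v.map_mul, map_prod]
        refine mul_le_mul' hcoeff (Finset.prod_le_prod' fun i hi => ?_)
        rw [map_pow]
        exact pow_le_pow_left' (hg i (hwd ▸ Finsupp.le_weight_of_ne_zero' w
          (Finsupp.mem_support_iff.1 hi))) _
    _ = K ^ m := by
        rw [one_mul, ← hwd, Finsupp.weight_apply, Finsupp.sum, ← Finset.prod_pow_eq_pow_sum]
        simp only [← pow_mul, smul_eq_mul, mul_comm]

theorem MvPolynomial.IsWeightedHomogeneous.of_C_mul {σ R : Type*} [CommRing R]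
    [IsDomain R] {w : σ → ℕ} {φ : MvPolynomial σ R} {m : ℕ} {c : R} (hc : c ≠ 0)
    (h : (C c * φ).IsWeightedHomogeneous w m) : φ.IsWeightedHomogeneous w m :=
  fun d hd => h (by rwa [coeff_C_mul, mul_ne_zero_iff_left hc])

theorem MvPolynomial.tendsto_aeval_of_mem_supported {R S σ ι : Type*} [CommRing R] [CommRing S]
    [Algebra R S] [TopologicalSpace S] [IsTopologicalRing S] {φ : MvPolynomial σ R} {s : Set σ}
    (hφ : φ ∈ supported R s) {l : Filter ι} {g : ι → σ → S} {g' : σ → S}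
    (hg : ∀ i ∈ s, Tendsto (fun j => g j i) l (𝓝 (g' i))) :
    Tendsto (fun j => aeval (g j) φ) l (𝓝 (aeval g' φ)) := by
  rw [supported_eq_range_rename] at hφ
  obtain ⟨ψ, rfl⟩ := hφ
  simp only [AlgHom.toRingHom_eq_coe, RingHom.coe_coe, aeval_rename]
  have hψ : Continuous fun x : s → S => aeval x ψ := by
    simpa only [aeval_def, eval₂_eq_eval_map] using continuous_eval (map (algebraMap R S) ψ)
  exact (hψ.tendsto _).comp (tendsto_pi_nhds.2 fun i => hg i i.2)

theorem Valued.tendsto_zero_of_tendsto_coe_valuation {R ι : Type*} [Ring R] [Valued R ℝ≥0]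
    {l : Filter ι} {f : ι → R}
    (h : Tendsto (fun i => ((Valued.v (f i) : ℝ≥0) : ℝ≥0∞)) l (𝓝 0)) : Tendsto f l (𝓝 0) := by
  refine (Valued.hasBasis_nhds_zero R ℝ≥0).tendsto_right_iff.2 fun γ _ => ?_
  have hγ : (0 : ℝ≥0∞) < (MonoidWithZeroHom.ValueGroup₀.embedding γ.1 : ℝ≥0) := by
    simp [pos_iff_ne_zero]
  filter_upwards [(tendsto_order.1 h).2 _ hγ] with i hi
  exact (Valuation.restrict_lt_iff_lt_embedding _).2 (by exact_mod_cast hi)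

theorem Valued.coe_valuation_le_of_tendsto {R ι : Type*} [Ring R] [Valued R ℝ≥0]
    {l : Filter ι} [l.NeBot] {f : ι → R} {a : R} (h : Tendsto f l (𝓝 a)) {δ : ℝ≥0∞}
    (hδ : ∀ᶠ i in l, ((Valued.v (f i) : ℝ≥0) : ℝ≥0∞) ≤ δ) :
    ((Valued.v a : ℝ≥0) : ℝ≥0∞) ≤ δ := by
  rcases eq_or_ne (Valued.v a) 0 with ha | ha
  · simp [ha]
  obtain ⟨i, hi, hia⟩ := ((h.eventually (Valued.locally_const ha)).and hδ).exists
  rwa [← show Valued.v (f i) = Valued.v a from hi]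

namespace WittVector

variable (p : ℕ)

theorem isWeightedHomogeneous_rename_wittPolynomial (b : Fin 2) (n : ℕ) :
    (rename (Prod.mk b) (wittPolynomial p ℤ n)).IsWeightedHomogeneous
      (fun q : Fin 2 × ℕ => p ^ q.2) (p ^ n) := by
  rw [wittPolynomial_eq_sum_C_mul_X_pow, map_sum]
  refine IsWeightedHomogeneous.sum _ _ _ fun i hi => ?_
  simp only [map_mul, map_pow, rename_C, rename_X]
  have := ((isWeightedHomogeneous_X ℤ (fun q : Fin 2 × ℕ => p ^ q.2) (b, i)).pow
    (p ^ (n - i))).C_mul ((p : ℤ) ^ i)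
  rwa [smul_eq_mul, ← pow_add, Nat.sub_add_cancel (Finset.mem_range_succ_iff.1 hi),
    map_pow] at this

variable [hp : Fact p.Prime]

theorem C_mul_wittSub (n : ℕ) :
    C ((p : ℤ) ^ n) * wittSub p n =
      (rename (Prod.mk 0) (wittPolynomial p ℤ n) - rename (Prod.mk 1) (wittPolynomial p ℤ n))
      - ∑ i ∈ Finset.range n, C ((p : ℤ) ^ i) * wittSub p i ^ p ^ (n - i) := by
  have h := wittStructureInt_prop p (X (0 : Fin 2) - X 1) n
  rw [bind₁, aeval_wittPolynomial, map_sub, bind₁_X_right, bind₁_X_right,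
    Finset.sum_range_succ] at h
  simp only [← C_eq_coe_nat, ← map_pow, Nat.sub_self, pow_zero, pow_one] at h
  rw [show wittSub p = wittStructureInt p (X 0 - X 1) from rfl]
  linear_combination h

theorem isWeightedHomogeneous_wittSub (n : ℕ) :
    (wittSub p n).IsWeightedHomogeneous (fun q : Fin 2 × ℕ => p ^ q.2) (p ^ n) := by
  induction n using Nat.strong_induction_on with
  | _ n ih =>
    refine .of_C_mul (pow_ne_zero n (Int.natCast_ne_zero.2 hp.out.ne_zero)) ?_
    rw [C_mul_wittSub]
    refine ((isWeightedHomogeneous_rename_wittPolynomial p 0 n).sub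
      (isWeightedHomogeneous_rename_wittPolynomial p 1 n)).sub
      (IsWeightedHomogeneous.sum _ _ _ fun i hi => ?_)
    have := ((ih i (Finset.mem_range.1 hi)).pow (p ^ (n - i))).C_mul ((p : ℤ) ^ i)
    rwa [smul_eq_mul, ← pow_add, Nat.sub_add_cancel (Finset.mem_range.1 hi).le] at this

theorem wittSub_sub_X_sub_X_mem_supported (n : ℕ) :
    wittSub p n - (X (0, n) - X (1, n)) ∈ supported ℤ {q : Fin 2 × ℕ | q.2 < n} := by
  set S := supported ℤ {q : Fin 2 × ℕ | q.2 < n}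
  have hS : ∀ φ : MvPolynomial (Fin 2 × ℕ) ℤ, φ ∈ S ↔ ∀ q ∈ φ.vars, q.2 < n := fun φ => by
    rw [mem_supported]; rfl
  have hpn : ((p : ℤ) ^ n) ≠ 0 := pow_ne_zero n (Int.natCast_ne_zero.2 hp.out.ne_zero)
  have hwitt : ∀ b : Fin 2,
      rename (Prod.mk b) (wittPolynomial p ℤ n) - C ((p : ℤ) ^ n) * X (b, n) ∈ S := fun b => by
    rw [wittPolynomial_eq_sum_C_mul_X_pow, Finset.sum_range_succ, map_add, Nat.sub_self,
      pow_zero, pow_one, map_mul, rename_C, rename_X, add_sub_cancel_right, map_sum]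
    refine Subalgebra.sum_mem _ fun i hi => ?_
    simp only [map_mul, map_pow, rename_C, rename_X]
    exact Subalgebra.mul_mem _ (Subalgebra.pow_mem _ (Subalgebra.algebraMap_mem _ (p : ℤ)) _)
      (Subalgebra.pow_mem _ ((X_mem_supported (s := {q : Fin 2 × ℕ | q.2 < n})).2
        (Finset.mem_range.1 hi)) _)
  have hsum : ∑ i ∈ Finset.range n, C ((p : ℤ) ^ i) * wittSub p i ^ p ^ (n - i) ∈ S := by
    refine Subalgebra.sum_mem _ fun i hi => Subalgebra.mul_mem _ (Subalgebra.algebraMap_mem _ _)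
      (Subalgebra.pow_mem _ ((hS _).2 fun q hq => ?_) _)
    have := Finset.mem_range.1 (Finset.mem_product.1 (wittSub_vars p i hq)).2
    exact lt_of_lt_of_le this (Finset.mem_range.1 hi)
  have key : C ((p : ℤ) ^ n) * (wittSub p n - (X (0, n) - X (1, n))) ∈ S := by
    have := Subalgebra.sub_mem _ (Subalgebra.sub_mem _ (hwitt 0) (hwitt 1)) hsum
    convert this using 1
    rw [mul_sub, C_mul_wittSub]
    ring
  rw [hS] at key ⊢
  rwa [vars_C_mul _ hpn] at key

variable {p}

theorem peval_wittSub_sub_X_sub_X {R : Type*} [CommRing R] (a b : WittVector p R) (n : ℕ) :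
    peval (wittSub p n - (X (0, n) - X (1, n))) ![a.coeff, b.coeff] =
      (a - b).coeff n - (a.coeff n - b.coeff n) := by
  simp [peval, sub_coeff]

theorem tendsto_coeff_sub {R ι : Type*} [CommRing R] [TopologicalSpace R]
    [IsTopologicalRing R] {l : Filter ι} {a b : ι → WittVector p R} {a' b' : WittVector p R}
    (ha : ∀ n, Tendsto (fun j => (a j).coeff n) l (𝓝 (a'.coeff n)))
    (hb : ∀ n, Tendsto (fun j => (b j).coeff n) l (𝓝 (b'.coeff n))) (n : ℕ) :
    Tendsto (fun j => (a j - b j).coeff n) l (𝓝 ((a' - b').coeff n)) := by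
  simp only [sub_coeff, peval]
  refine tendsto_aeval_of_mem_supported (s := Set.univ) (by simp [supported_univ]) ?_
  rintro ⟨k, m⟩ -
  fin_cases k
  exacts [ha m, hb m]

end WittVector

section GaussNorm

variable {p : ℕ} [hp : Fact p.Prime] {F : Type*} [Field F] [Valued F ℝ≥0] {r : ℝ}

theorem gaussNorm_le_iff (hr : 0 < r) {x : WittVector p F} {c : ℝ≥0∞} :
    gaussNorm p F r x ≤ c ↔
      ∀ n, ((Valued.v (x.coeff n) : ℝ≥0) : ℝ≥0∞) ≤ ((c * p ^ n) ^ r⁻¹) ^ p ^ n := by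
  refine iSup_le_iff.trans (forall_congr' fun n => ?_)
  have hp0 : (p : ℝ≥0∞) ^ n ≠ 0 := pow_ne_zero n (by exact_mod_cast hp.out.ne_zero)
  have hpos : 0 < r * ((p : ℝ)⁻¹ ^ n) := mul_pos hr (by have := hp.out.pos; positivity)
  have hexp : ((c * p ^ n) ^ r⁻¹) ^ p ^ n = (c * p ^ n) ^ (r * ((p : ℝ)⁻¹ ^ n))⁻¹ := by
    rw [← ENNReal.rpow_natCast, ← ENNReal.rpow_mul, mul_inv, inv_pow, inv_inv]
    push_cast
    rfl
  rw [hexp, ENNReal.le_rpow_inv_iff hpos, ← ENNReal.inv_pow, ← ENNReal.div_eq_inv_mul,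
    ENNReal.div_le_iff hp0 (ENNReal.pow_ne_top (ENNReal.natCast_ne_top p))]

theorem coe_valuation_coeff_le_of_gaussNorm_le (hr : 0 < r) {x : WittVector p F} {c : ℝ≥0∞}
    (hx : gaussNorm p F r x ≤ c) {i n : ℕ} (hin : i ≤ n) :
    ((Valued.v (x.coeff i) : ℝ≥0) : ℝ≥0∞) ≤ ((c * p ^ n) ^ r⁻¹) ^ p ^ i := by
  refine ((gaussNorm_le_iff hr).1 hx i).trans ?_
  gcongr
  exact_mod_cast hp.out.one_le

theorem gaussNorm_sub_le (hr : 0 < r) (x y : WittVector p F) :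
    gaussNorm p F r (x - y) ≤ max (gaussNorm p F r x) (gaussNorm p F r y) := by
  set c := max (gaussNorm p F r x) (gaussNorm p F r y)
  rcases eq_or_ne c ⊤ with hc | hc
  · exact hc ▸ le_top
  refine (gaussNorm_le_iff hr).2 fun n => ?_
  set K := ((c * p ^ n) ^ r⁻¹).toNNReal
  have hK : ((c * p ^ n) ^ r⁻¹ : ℝ≥0∞) = K := (ENNReal.coe_toNNReal (by
    exact ENNReal.rpow_ne_top_of_nonneg (inv_nonneg.2 hr.le)
      (ENNReal.mul_ne_top hc (ENNReal.pow_ne_top (ENNReal.natCast_ne_top p))))).symm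
  rw [hK, WittVector.sub_coeff]
  have hxy : ∀ q : Fin 2 × ℕ, p ^ q.2 ≤ p ^ n →
      Valued.v (Function.uncurry ![x.coeff, y.coeff] q) ≤ K ^ p ^ q.2 := by
    rintro ⟨b, i⟩ hi
    have hb : gaussNorm p F r (![x, y] b) ≤ c := by
      fin_cases b
      exacts [le_max_left _ _, le_max_right _ _]
    have := coe_valuation_coeff_le_of_gaussNorm_le hr hb
      ((Nat.pow_le_pow_iff_right hp.out.one_lt).1 hi)
    rw [hK] at this
    fin_cases b <;> exact_mod_cast this
  exact_mod_cast Valued.v.map_aeval_le_pow_of_isWeightedHomogeneous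
    (WittVector.isWeightedHomogeneous_wittSub p n) hxy

theorem tendsto_coeff_of_tendsto_gaussNorm (hr : 0 < r) {ι : Type*} {l : Filter ι}
    {y : ι → WittVector p F} (hy : Tendsto (fun j => gaussNorm p F r (y j)) l (𝓝 0)) (n : ℕ) :
    Tendsto (fun j => (y j).coeff n) l (𝓝 0) := by
  refine Valued.tendsto_zero_of_tendsto_coe_valuation ?_
  have hbound : Tendsto (fun c : ℝ≥0∞ => ((c * p ^ n) ^ r⁻¹) ^ p ^ n) (𝓝 0) (𝓝 0) := by
    have hcont : Continuous fun c : ℝ≥0∞ => ((c * p ^ n) ^ r⁻¹) ^ p ^ n :=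
      (ENNReal.continuous_pow _).comp (ENNReal.continuous_rpow_const.comp
        (ENNReal.continuous_mul_const (ENNReal.pow_ne_top (ENNReal.natCast_ne_top p))))
    simpa [ENNReal.zero_rpow_of_pos (inv_pos.2 hr), hp.out.ne_zero] using hcont.tendsto 0
  exact tendsto_of_tendsto_of_tendsto_of_le_of_le tendsto_const_nhds (hbound.comp hy)
    (fun _ => zero_le) fun j => (gaussNorm_le_iff hr).1 le_rfl n

theorem gaussNorm_le_of_tendsto_coeff (hr : 0 < r) {ι : Type*} {l : Filter ι} [l.NeBot]
    {y : ι → WittVector p F} {z : WittVector p F}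
    (hy : ∀ n, Tendsto (fun j => (y j).coeff n) l (𝓝 (z.coeff n))) {c : ℝ≥0∞}
    (hc : ∀ᶠ j in l, gaussNorm p F r (y j) ≤ c) : gaussNorm p F r z ≤ c :=
  (gaussNorm_le_iff hr).2 fun n => Valued.coe_valuation_le_of_tendsto (hy n)
    (hc.mono fun _ hj => (gaussNorm_le_iff hr).1 hj n)

theorem cauchySeq_coeff_of_tendsto_gaussNorm_sub [CompleteSpace F] (hr : 0 < r)
    {x : ℕ → WittVector p F}
    (hx : Tendsto (fun q : ℕ × ℕ => gaussNorm p F r (x q.1 - x q.2)) (atTop ×ˢ atTop) (𝓝 0))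
    (n : ℕ) : CauchySeq fun i => (x i).coeff n := by
  induction n using Nat.strong_induction_on with
  | _ n ih =>
  set l : ℕ → F := fun m => limUnder atTop fun i => (x i).coeff m
  have hl : ∀ m < n, Tendsto (fun i => (x i).coeff m) atTop (𝓝 (l m)) :=
    fun m hm => (ih m hm).tendsto_limUnder
  -- `(x i)ₙ - (x j)ₙ` differs from `(x i - x j)ₙ` by a polynomial in the coefficients of index
  -- `< n`, which converges to its value `0` on the diagonal.
  have hrem : Tendsto (fun q : ℕ × ℕ => WittVector.peval
      (WittVector.wittSub p n - (X (0, n) - X (1, n))) ![(x q.1).coeff, (x q.2).coeff])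
      (atTop ×ˢ atTop) (𝓝 0) := by
    have hdiag := WittVector.peval_wittSub_sub_X_sub_X (WittVector.mk p l) (WittVector.mk p l) n
    rw [sub_self, WittVector.zero_coeff, sub_self, sub_zero] at hdiag
    rw [← hdiag]
    refine tendsto_aeval_of_mem_supported
      (WittVector.wittSub_sub_X_sub_X_mem_supported p n) fun ⟨k, m⟩ hm => ?_
    fin_cases k
    exacts [(hl m hm).comp tendsto_fst, (hl m hm).comp tendsto_snd]
  have hdiff := (tendsto_coeff_of_tendsto_gaussNorm hr hx n).sub hrem
  simp only [WittVector.peval_wittSub_sub_X_sub_X, sub_sub_cancel, sub_zero] at hdiff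
  exact (IsUniformAddGroup.cauchy_map_iff_tendsto _ _).2 ⟨inferInstance, hdiff⟩

end GaussNorm

theorem gaussNorm_complete_general (p : ℕ) [Fact p.Prime] (F : Type*)
    [Field F] [Valued F ℝ≥0] [CompleteSpace F]
    (r : ℝ) (hr : 0 < r)
    (x : ℕ → WittVector p F) (hfin : ∀ i, gaussNorm p F r (x i) ≠ ⊤)
    (hcauchy : ∀ ε : ℝ≥0∞, 0 < ε → ∃ N : ℕ, ∀ i j, N ≤ i → N ≤ j →
      gaussNorm p F r (x i - x j) < ε) :
    ∃ L : WittVector p F, gaussNorm p F r L ≠ ⊤ ∧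
      ∀ ε : ℝ≥0∞, 0 < ε → ∃ N : ℕ, ∀ i, N ≤ i → gaussNorm p F r (x i - L) < ε := by
  have hx : Tendsto (fun q : ℕ × ℕ => gaussNorm p F r (x q.1 - x q.2)) (atTop ×ˢ atTop) (𝓝 0) := by
    refine ENNReal.tendsto_nhds_zero.2 fun ε hε => ?_
    obtain ⟨N, hN⟩ := hcauchy ε hε
    filter_upwards [prod_mem_prod (eventually_ge_atTop N) (eventually_ge_atTop N)] with q hq
    exact (hN _ _ hq.1 hq.2).le
  set L := WittVector.mk p fun n => limUnder atTop fun i => (x i).coeff n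
  have hL (n : ℕ) : Tendsto (fun i => (x i).coeff n) atTop (𝓝 (L.coeff n)) :=
    (cauchySeq_coeff_of_tendsto_gaussNorm_sub hr hx n).tendsto_limUnder
  have happrox : ∀ ε : ℝ≥0∞, 0 < ε → ∃ N : ℕ, ∀ i, N ≤ i → gaussNorm p F r (x i - L) < ε := by
    intro ε hε
    obtain ⟨ε', hε', hε'ε⟩ := exists_between hε
    obtain ⟨N, hN⟩ := hcauchy ε' hε'
    refine ⟨N, fun i hi => lt_of_le_of_lt ?_ hε'ε⟩
    exact gaussNorm_le_of_tendsto_coeff hr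
      (WittVector.tendsto_coeff_sub (fun _ => tendsto_const_nhds) hL)
      ((eventually_ge_atTop N).mono fun j hj => (hN i j hi hj).le)
  obtain ⟨N, hN⟩ := happrox 1 one_pos
  refine ⟨L, ne_top_of_le_ne_top ?_ (sub_sub_cancel (x N) L ▸ gaussNorm_sub_le hr _ _), happrox⟩
  exact max_ne_top (hfin N) (hN N le_rfl).ne_top

/-- For `F` a perfect analytic field of characteristic `p` and `r > 0`, the ring
`W^{r-}(F) = {x ∈ W(F) : |x|_r < ∞}` is complete with respect to `|·|_r`:
every Cauchy sequence has a limit. -/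
theorem gaussNorm_complete (p : ℕ) [Fact p.Prime] (F : Type*)
    [Field F] [Valued F ℝ≥0] [CompleteSpace F] [ExpChar F p] [PerfectRing F p]
    (r : ℝ) (hr : 0 < r)
    (x : ℕ → WittVector p F) (hfin : ∀ i, gaussNorm p F r (x i) ≠ ⊤)
    (hcauchy : ∀ ε : ℝ≥0∞, 0 < ε → ∃ N : ℕ, ∀ i j, N ≤ i → N ≤ j →
      gaussNorm p F r (x i - x j) < ε) :
    ∃ L : WittVector p F, gaussNorm p F r L ≠ ⊤ ∧
      ∀ ε : ℝ≥0∞, 0 < ε → ∃ N : ℕ, ∀ i, N ≤ i → gaussNorm p F r (x i - L) < ε :=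
  gaussNorm_complete_general p F r hr x hfin hcauchy
end
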